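/- arXiv:1910.14354 — 10 statements merged into one kernel-verified Lean document; each statement's English description precedes it below -/
import Mathlib

section
/- Let k be a symmetric positive-semidefinite kernel on a type ι with k z z ≤ 1 for all z, and let σ > 0 be a noise level. For any n, any observation points x : Fin n → ι, any new observation point w : ι, and any z : ι, the decrease of the Gaussian-process posterior variance at z caused by adding the observation point w satisfies σ²(z; x) − σ²(z; x⁺) ≤ σ²(w; x) / σ², where x⁺ = Fin.snoc x w is x with w appended. -/
open Matrix

/-- The Gaussian-process posterior covariance `k(z, z'; x)` given observation
points `x : Fin n → ι` and noise level `σ`: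
`k z z' − k_x(z)ᵀ (K_x + σ² I)⁻¹ k_x(z')`. -/
noncomputable def postCov {ι : Type*} (k : ι → ι → ℝ) (σ : ℝ) {n : ℕ}
    (x : Fin n → ι) (z z' : ι) : ℝ :=
  k z z' -
    dotProduct (fun i => k (x i) z)
      (Matrix.mulVec
        ((Matrix.of (fun i j => k (x i) (x j)) + σ ^ 2 • (1 : Matrix (Fin n) (Fin n) ℝ))⁻¹)
        (fun i => k (x i) z'))

/-- The Gaussian-process posterior variance `σ²(z; x) = k(z, z; x)`. -/
noncomputable def postVar {ι : Type*} (k : ι → ι → ℝ) (σ : ℝ) {n : ℕ}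
    (x : Fin n → ι) (z : ι) : ℝ :=
  postCov k σ x z z

/-!
Write `a = σ²(w; x)` and `c = k(w, z; x)`. Viewing `K_{x⁺} + σ² I` as `K_x + σ² I` bordered by
one row and column, the Schur complement of the block `K_x + σ² I` is `a + σ²`, and solving the bordered
system gives the rank-one update `(a + σ²) (σ²(z; x) − σ²(z; x⁺)) = c²`. The posterior covariance
on a finite family `y` is the Schur complement of the `x`-block in the positive semidefinite matrix
`K_{x ⊔ y} + diag(σ² I, 0)`, so it is positive semidefinite; its `2 × 2` determinant on `(w, z)`
gives `c² ≤ a σ²(z; x)`, and `σ²(z; x) ≤ k z z ≤ 1`. Hence the decrement is at most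
`a / (a + σ²) ≤ a / σ²`.
-/

namespace Matrix

variable {K : Type*} [CommRing K]

theorem dotProduct_inv_mulVec_comm {m : Type*} [Fintype m] [DecidableEq m] {A : Matrix m m K}
    (hA : A.IsSymm) (u v : m → K) : u ⬝ᵥ A⁻¹ *ᵥ v = v ⬝ᵥ A⁻¹ *ᵥ u := by
  rw [dotProduct_mulVec, ← mulVec_transpose, transpose_nonsing_inv, hA.eq, dotProduct_comm]

theorem schur_mul_inv_quadForm_sub_castSucc {n : ℕ} {M : Matrix (Fin (n + 1)) (Fin (n + 1)) K}
    {A : Matrix (Fin n) (Fin n) K} {b : Fin n → K}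
    (hMA : ∀ i j, M i.castSucc j.castSucc = A i j)
    (hMcol : ∀ i, M i.castSucc (Fin.last n) = b i)
    (hMrow : ∀ j, M (Fin.last n) j.castSucc = b j)
    (hA : A.IsSymm) (hMu : IsUnit M.det) (hAu : IsUnit A.det) (v : Fin (n + 1) → K) :
    (M (Fin.last n) (Fin.last n) - b ⬝ᵥ A⁻¹ *ᵥ b) *
        (v ⬝ᵥ M⁻¹ *ᵥ v - (v ∘ Fin.castSucc) ⬝ᵥ A⁻¹ *ᵥ (v ∘ Fin.castSucc)) =
      (v (Fin.last n) - b ⬝ᵥ A⁻¹ *ᵥ (v ∘ Fin.castSucc)) ^ 2 := by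
  set u := v ∘ Fin.castSucc
  set q := M⁻¹ *ᵥ v
  have hMq : M *ᵥ q = v := by rw [mulVec_mulVec, mul_nonsing_inv _ hMu, one_mulVec]
  have hupper : A *ᵥ (q ∘ Fin.castSucc) + q (Fin.last n) • b = u := by
    funext i
    simpa [mulVec, dotProduct, Fin.sum_univ_castSucc, hMA, hMcol, mul_comm, u] using
      congrFun hMq i.castSucc
  have hlast : b ⬝ᵥ (q ∘ Fin.castSucc) + M (Fin.last n) (Fin.last n) * q (Fin.last n) =
      v (Fin.last n) := by
    simpa [mulVec, dotProduct, Fin.sum_univ_castSucc, hMrow, mul_comm] using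
      congrFun hMq (Fin.last n)
  have hq : q ∘ Fin.castSucc = A⁻¹ *ᵥ u - q (Fin.last n) • A⁻¹ *ᵥ b := by
    rw [← hupper, mulVec_add, mulVec_mulVec, nonsing_inv_mul _ hAu, one_mulVec, mulVec_smul,
      add_sub_cancel_right]
  have hvq : v ⬝ᵥ q = u ⬝ᵥ (q ∘ Fin.castSucc) + v (Fin.last n) * q (Fin.last n) := by
    simp [dotProduct, Fin.sum_univ_castSucc, u]
  rw [hq, dotProduct_sub, dotProduct_smul, smul_eq_mul] at hlast hvq
  rw [dotProduct_inv_mulVec_comm hA u b] at hvq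
  linear_combination (M (Fin.last n) (Fin.last n) - b ⬝ᵥ A⁻¹ *ᵥ b) * hvq
    + (v (Fin.last n) - b ⬝ᵥ A⁻¹ *ᵥ u) * hlast

theorem posDef_add_sq_smul_one {m : Type*} [Fintype m] [DecidableEq m] {P : Matrix m m ℝ}
    (hP : P.PosSemidef) {σ : ℝ} (hσ : σ ≠ 0) : (P + σ ^ 2 • 1).PosDef :=
  PosDef.posSemidef_add hP (PosDef.one.smul (by positivity))

end Matrix

section GaussianProcess

variable {ι : Type*}

def IsPosSemidefKernel (k : ι → ι → ℝ) : Prop :=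
  ∀ (n : ℕ) (x : Fin n → ι),
    (Matrix.of (fun i j => k (x i) (x j)) : Matrix (Fin n) (Fin n) ℝ).PosSemidef

variable {k : ι → ι → ℝ} {σ : ℝ} {n : ℕ}

theorem IsPosSemidefKernel.posSemidef (hk : IsPosSemidefKernel k) {m : Type*} [Fintype m]
    (y : m → ι) : (Matrix.of (fun i j => k (y i) (y j)) : Matrix m m ℝ).PosSemidef := by
  rw [← posSemidef_submatrix_equiv (Fintype.equivFin m).symm]
  exact hk _ (y ∘ (Fintype.equivFin m).symm)

theorem mul_postVar_sub_postVar_snoc (hσ : σ ≠ 0) (hsymm : ∀ z z', k z z' = k z' z)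
    (hk : IsPosSemidefKernel k) (x : Fin n → ι) (w z : ι) :
    (postVar k σ x w + σ ^ 2) * (postVar k σ x z - postVar k σ (Fin.snoc x w) z) =
      postCov k σ x w z ^ 2 := by
  have hA := posDef_add_sq_smul_one (hk n x) hσ
  have hM := posDef_add_sq_smul_one (hk (n + 1) (Fin.snoc x w)) hσ
  have key := schur_mul_inv_quadForm_sub_castSucc
    (v := fun i => k ((Fin.snoc x w : Fin (n + 1) → ι) i) z)
    (A := Matrix.of (fun i j => k (x i) (x j)) + σ ^ 2 • 1) (b := fun i => k (x i) w)
    (fun i j => by simp [one_apply])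
    (fun i => by simp [(Fin.castSucc_lt_last i).ne])
    (fun j => by simp [(Fin.castSucc_lt_last j).ne', hsymm w])
    (isHermitian_iff_isSymm.mp hA.isHermitian) (hM.isUnit.map detMonoidHom)
    (hA.isUnit.map detMonoidHom)
  simp only [Function.comp_def, Fin.snoc_castSucc, Matrix.add_apply, of_apply, Fin.snoc_last,
    Matrix.smul_apply, one_apply_eq, smul_eq_mul, mul_one] at key
  unfold postVar postCov
  linear_combination key

theorem posSemidef_postCov (hσ : σ ≠ 0) (hsymm : ∀ z z', k z z' = k z' z)
    (hk : IsPosSemidefKernel k) (x : Fin n → ι) {m : Type*} [Fintype m] (y : m → ι) :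
    (Matrix.of (fun i j => postCov k σ x (y i) (y j)) : Matrix m m ℝ).PosSemidef := by
  classical
  set A := Matrix.of (fun i j => k (x i) (x j)) + σ ^ 2 • (1 : Matrix (Fin n) (Fin n) ℝ)
  have hA : A.PosDef := posDef_add_sq_smul_one (hk n x) hσ
  have : Invertible A := hA.isUnit.invertible
  let B : Matrix (Fin n) m ℝ := Matrix.of fun i j => k (x i) (y j)
  have hblocks : (fromBlocks A B Bᴴ (Matrix.of fun i j => k (y i) (y j))).PosSemidef := by
    have hsplit : fromBlocks A B Bᴴ (Matrix.of fun i j => k (y i) (y j)) =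
        Matrix.of (fun i j => k (Sum.elim x y i) (Sum.elim x y j)) +
          diagonal (Sum.elim (fun _ => σ ^ 2) 0) := by
      ext (i | i) (j | j) <;> simp [A, B, hsymm, one_apply, diagonal_apply]
    rw [hsplit]
    exact (hk.posSemidef _).add (PosSemidef.diagonal fun i => by cases i <;> simp [sq_nonneg])
  have hschur : Matrix.of (fun i j => postCov k σ x (y i) (y j)) =
      Matrix.of (fun i j => k (y i) (y j)) - Bᴴ * A⁻¹ * B := by
    ext i j
    simp only [postCov, B, A, Matrix.sub_apply, mul_apply, conjTranspose_apply, of_apply,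
      star_trivial, dotProduct, mulVec, Finset.mul_sum, Finset.sum_mul, mul_assoc]
    rw [Finset.sum_comm]
  rw [hschur]
  exact (PosDef.fromBlocks₁₁ B _ hA).mp hblocks

theorem postCov_sq_le_postVar_mul (hσ : σ ≠ 0) (hsymm : ∀ z z', k z z' = k z' z)
    (hk : IsPosSemidefKernel k) (x : Fin n → ι) (w z : ι) :
    postCov k σ x w z ^ 2 ≤ postVar k σ x w * postVar k σ x z := by
  have hP := posSemidef_postCov hσ hsymm hk x ![w, z]
  have hdet := hP.det_nonneg
  have hPsymm := hP.isHermitian.apply 0 1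
  simp only [det_fin_two, of_apply, cons_val_zero, cons_val_one, cons_val_fin_one, sub_nonneg,
    star_trivial] at hdet hPsymm
  rw [hPsymm, ← sq] at hdet
  exact hdet

theorem postVar_nonneg (hσ : σ ≠ 0) (hsymm : ∀ z z', k z z' = k z' z)
    (hk : IsPosSemidefKernel k) (x : Fin n → ι) (z : ι) : 0 ≤ postVar k σ x z :=
  (posSemidef_postCov hσ hsymm hk x fun _ : Unit => z).diag_nonneg (i := ())

theorem postVar_le_prior (hσ : σ ≠ 0) (hk : IsPosSemidefKernel k) (x : Fin n → ι) (z : ι) :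
    postVar k σ x z ≤ k z z := by
  have hquad := (posDef_add_sq_smul_one (hk n x) hσ).posSemidef.inv.dotProduct_mulVec_nonneg
    (fun i => k (x i) z)
  unfold postVar postCov
  simpa using hquad

end GaussianProcess

theorem posterior_variance_decrement_le
    {ι : Type*} (k : ι → ι → ℝ) (σ : ℝ)
    (hσ : 0 < σ)
    (hsymm : ∀ z z', k z z' = k z' z)
    (hpsd : ∀ (n : ℕ) (x : Fin n → ι),
      (Matrix.of (fun i j => k (x i) (x j)) : Matrix (Fin n) (Fin n) ℝ).PosSemidef)
    (hbound : ∀ z, k z z ≤ 1)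
    (n : ℕ) (x : Fin n → ι) (w : ι) (z : ι) :
    postVar k σ x z - postVar k σ (Fin.snoc x w) z ≤ postVar k σ x w / σ ^ 2 := by
  have hdec := mul_postVar_sub_postVar_snoc hσ.ne' hsymm hpsd x w z
  have hcs := postCov_sq_le_postVar_mul hσ.ne' hsymm hpsd x w z
  have hw := postVar_nonneg hσ.ne' hsymm hpsd x w
  have hz : postVar k σ x z ≤ 1 := (postVar_le_prior hσ.ne' hpsd x z).trans (hbound z)
  have hD : 0 ≤ postVar k σ x z - postVar k σ (Fin.snoc x w) z :=
    nonneg_of_mul_nonneg_right (hdec ▸ sq_nonneg _) (by positivity)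
  rw [le_div_iff₀ (by positivity)]
  calc (postVar k σ x z - postVar k σ (Fin.snoc x w) z) * σ ^ 2
      ≤ (postVar k σ x w + σ ^ 2) * (postVar k σ x z - postVar k σ (Fin.snoc x w) z) := by
        nlinarith
    _ = postCov k σ x w z ^ 2 := hdec
    _ ≤ postVar k σ x w * postVar k σ x z := hcs
    _ ≤ postVar k σ x w := mul_le_of_le_one_right hw hz
end

section
/- Let k be a symmetric positive-semidefinite kernel on a type ι and σ > 0 a noise level. For any n, any observation points x : Fin n → ι, any new observation point w : ι, and any z : ι, the Gaussian-process posterior variances satisfy the exact rank-one update identity σ²(z; x) − σ²(z; x⁺) = k(w, z; x)² / (σ²(w; x) + σ²), where x⁺ = Fin.snoc x w is x with w appended. -/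
open Matrix

/-!
Write `K` for the regularised Gram matrix `K_x + σ² I` and `A` for that of `x⁺`. Up to symmetry of
`k`, `A` is the bordered matrix `[[K, b], [bᵀ, d]]` with `b = k_x(w)` and `d = k w w + σ²`.
Solving `A y = (a, α)` by eliminating the last unknown gives the last coordinate of `y` as
`(α - bᵀ K⁻¹ a) / s`, where `s = d - bᵀ K⁻¹ b = σ²(w; x) + σ²` is the Schur complement of `K`; it is
nonzero because `A` and `K` are invertible. Substituting into `k(z, z'; x⁺)` yields the rank-one
update `k(z, z'; x⁺) = k(z, z'; x) - k(w, z; x) k(w, z'; x) / s`, and `z = z'` gives the theorem.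
-/

section Bordered

variable {R : Type*} {n : ℕ}

/-- The block matrix `[[K, b], [cᵀ, d]]`. -/
def borderedMatrix (K : Matrix (Fin n) (Fin n) R) (b c : Fin n → R) (d : R) :
    Matrix (Fin (n + 1)) (Fin (n + 1)) R :=
  of fun i j => Fin.lastCases (Fin.lastCases d c j) (fun i => Fin.lastCases (b i) (K i) j) i

variable (K : Matrix (Fin n) (Fin n) R) (b c : Fin n → R) (d : R)

@[simp] lemma borderedMatrix_castSucc_castSucc (i j : Fin n) :
    borderedMatrix K b c d i.castSucc j.castSucc = K i j := by simp [borderedMatrix]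
@[simp] lemma borderedMatrix_castSucc_last (i : Fin n) :
    borderedMatrix K b c d i.castSucc (Fin.last n) = b i := by simp [borderedMatrix]
@[simp] lemma borderedMatrix_last_castSucc (j : Fin n) :
    borderedMatrix K b c d (Fin.last n) j.castSucc = c j := by simp [borderedMatrix]
@[simp] lemma borderedMatrix_last_last :
    borderedMatrix K b c d (Fin.last n) (Fin.last n) = d := by simp [borderedMatrix]

lemma snoc_dotProduct_snoc [Mul R] [AddCommMonoid R] (u v : Fin n → R) (α β : R) :
    (Fin.snoc u α : Fin (n + 1) → R) ⬝ᵥ Fin.snoc v β = u ⬝ᵥ v + α * β := by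
  simp [dotProduct, Fin.sum_univ_castSucc]

lemma borderedMatrix_mulVec_snoc [CommSemiring R] (y : Fin n → R) (η : R) :
    borderedMatrix K b c d *ᵥ Fin.snoc y η = Fin.snoc (K *ᵥ y + η • b) (c ⬝ᵥ y + d * η) := by
  ext i
  induction i using Fin.lastCases with
  | last => simp [mulVec, dotProduct, Fin.sum_univ_castSucc]
  | cast i => simp [mulVec, dotProduct, Fin.sum_univ_castSucc, mul_comm (b i)]

section Field

variable [Field R]

noncomputable def borderedSchur : R := d - c ⬝ᵥ K⁻¹ *ᵥ b

variable {K} (hK : IsUnit K)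
include hK

lemma borderedMatrix_mulVec_snoc_inv_mulVec (a : Fin n → R) (η : R) :
    borderedMatrix K b c d *ᵥ Fin.snoc (K⁻¹ *ᵥ (a - η • b)) η =
      Fin.snoc a (c ⬝ᵥ K⁻¹ *ᵥ a + η * borderedSchur K b c d) := by
  have hKK : K * K⁻¹ = 1 := K.mul_nonsing_inv ((isUnit_iff_isUnit_det K).mp hK)
  rw [borderedMatrix_mulVec_snoc, mulVec_mulVec, hKK, one_mulVec, sub_add_cancel,
    borderedSchur, mulVec_sub, mulVec_smul, dotProduct_sub, dotProduct_smul, smul_eq_mul]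
  ring_nf

lemma borderedSchur_ne_zero (hA : IsUnit (borderedMatrix K b c d)) :
    borderedSchur K b c d ≠ 0 := by
  intro hs
  -- otherwise `(-K⁻¹ b, 1)` is a nonzero vector in the kernel of the bordered matrix
  have hker := borderedMatrix_mulVec_snoc_inv_mulVec b c d hK 0 1
  have hzero : (Fin.snoc (0 : Fin n → R) 0 : Fin (n + 1) → R) = 0 := by
    ext i; induction i using Fin.lastCases <;> simp
  rw [hs, mulVec_zero, dotProduct_zero, mul_zero, add_zero, hzero,
    ← mulVec_zero (borderedMatrix K b c d)] at hker
  simpa using congrFun (mulVec_injective_iff_isUnit.mpr hA hker) (Fin.last n)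

lemma borderedMatrix_inv_mulVec_snoc (hA : IsUnit (borderedMatrix K b c d))
    (a : Fin n → R) (α : R) :
    (borderedMatrix K b c d)⁻¹ *ᵥ Fin.snoc a α =
      Fin.snoc (K⁻¹ *ᵥ (a - ((α - c ⬝ᵥ K⁻¹ *ᵥ a) / borderedSchur K b c d) • b))
        ((α - c ⬝ᵥ K⁻¹ *ᵥ a) / borderedSchur K b c d) := by
  have := hA.invertible
  refine inv_mulVec_eq_vec ?_
  rw [borderedMatrix_mulVec_snoc_inv_mulVec b c d hK,
    div_mul_cancel₀ _ (borderedSchur_ne_zero b c d hK hA), add_sub_cancel]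

lemma snoc_dotProduct_borderedMatrix_inv_mulVec_snoc (hA : IsUnit (borderedMatrix K b c d))
    (a' a : Fin n → R) (α' α : R) :
    Fin.snoc a' α' ⬝ᵥ (borderedMatrix K b c d)⁻¹ *ᵥ Fin.snoc a α =
      a' ⬝ᵥ K⁻¹ *ᵥ a +
        (α' - a' ⬝ᵥ K⁻¹ *ᵥ b) * (α - c ⬝ᵥ K⁻¹ *ᵥ a) / borderedSchur K b c d := by
  rw [borderedMatrix_inv_mulVec_snoc b c d hK hA, snoc_dotProduct_snoc, mulVec_sub, mulVec_smul,
    dotProduct_sub, dotProduct_smul, smul_eq_mul]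
  ring

end Field

end Bordered

section GaussianProcess

variable {ι : Type*} (k : ι → ι → ℝ) (σ : ℝ) {n : ℕ}

noncomputable def regGram (x : Fin n → ι) : Matrix (Fin n) (Fin n) ℝ :=
  of (fun i j => k (x i) (x j)) + σ ^ 2 • 1

lemma postCov_eq_regGram (x : Fin n → ι) (z z' : ι) :
    postCov k σ x z z' =
      k z z' - (fun i => k (x i) z) ⬝ᵥ (regGram k σ x)⁻¹ *ᵥ fun i => k (x i) z' :=
  rfl

variable {k}

lemma regGram_isSymm (hsymm : ∀ z z', k z z' = k z' z) (x : Fin n → ι) :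
    (regGram k σ x).IsSymm := by
  ext i j
  simp [regGram, one_apply, hsymm (x i), eq_comm]

lemma regGram_posDef {σ : ℝ} (hσ : σ ≠ 0) {x : Fin n → ι}
    (hpsd : (of fun i j => k (x i) (x j) : Matrix (Fin n) (Fin n) ℝ).PosSemidef) :
    (regGram k σ x).PosDef :=
  PosDef.posSemidef_add hpsd (PosDef.one.smul (by positivity))

lemma regGram_snoc (hsymm : ∀ z z', k z z' = k z' z) (x : Fin n → ι) (w : ι) :
    regGram k σ (Fin.snoc x w) =
      borderedMatrix (regGram k σ x) (fun i => k (x i) w) (fun i => k (x i) w)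
        (k w w + σ ^ 2) := by
  ext i j
  induction i using Fin.lastCases <;> induction j using Fin.lastCases <;>
    simp [regGram, one_apply, hsymm w, Fin.castSucc_ne_last, (Fin.castSucc_ne_last _).symm]

lemma postCov_comm (hsymm : ∀ z z', k z z' = k z' z) (x : Fin n → ι) (z z' : ι) :
    postCov k σ x z z' = postCov k σ x z' z := by
  rw [postCov_eq_regGram, postCov_eq_regGram, hsymm z, dotProduct_mulVec, ← vecMul_transpose,
    (regGram_isSymm σ hsymm x).inv, dotProduct_comm]

lemma postCov_snoc {σ : ℝ} (hσ : σ ≠ 0) (hsymm : ∀ z z', k z z' = k z' z)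
    (hpsd : ∀ (n : ℕ) (x : Fin n → ι),
      (of fun i j => k (x i) (x j) : Matrix (Fin n) (Fin n) ℝ).PosSemidef)
    (x : Fin n → ι) (w z z' : ι) :
    postCov k σ (Fin.snoc x w) z z' =
      postCov k σ x z z' - postCov k σ x w z * postCov k σ x w z' / (postVar k σ x w + σ ^ 2) := by
  have hvec (z : ι) :
      (fun i => k ((Fin.snoc x w : Fin (n + 1) → ι) i) z) =
        Fin.snoc (fun i => k (x i) z) (k w z) := by
    ext i; induction i using Fin.lastCases <;> simp
  have hA := (regGram_posDef hσ (hpsd (n + 1) (Fin.snoc x w))).isUnit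
  rw [regGram_snoc σ hsymm] at hA
  rw [postCov_eq_regGram, hvec, hvec, regGram_snoc σ hsymm,
    snoc_dotProduct_borderedMatrix_inv_mulVec_snoc _ _ _ (regGram_posDef hσ (hpsd n x)).isUnit hA,
    postCov_comm σ hsymm x w z]
  simp only [postVar, postCov_eq_regGram, borderedSchur, hsymm w z]
  ring

end GaussianProcess

theorem posterior_variance_rank_one_update
    {ι : Type*} (k : ι → ι → ℝ) (σ : ℝ)
    (hσ : 0 < σ)
    (hsymm : ∀ z z', k z z' = k z' z)
    (hpsd : ∀ (n : ℕ) (x : Fin n → ι),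
      (Matrix.of (fun i j => k (x i) (x j)) : Matrix (Fin n) (Fin n) ℝ).PosSemidef)
    (n : ℕ) (x : Fin n → ι) (w : ι) (z : ι) :
    postVar k σ x z - postVar k σ (Fin.snoc x w) z =
      (postCov k σ x w z) ^ 2 / (postVar k σ x w + σ ^ 2) := by
  rw [postVar, postVar, postCov_snoc hσ.ne' hsymm hpsd, sub_sub_cancel, ← sq]
end

section
/- Let k be a symmetric positive-semidefinite kernel on a type ι and σ > 0 a noise level. For any n, any observation points x : Fin n → ι, and any two points z₁, z₂ : ι, the Gaussian-process posterior covariance is dominated by the average of the posterior variances: 2 · k(z₁, z₂; x) ≤ σ²(z₁; x) + σ²(z₂; x). -/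
/-!
For finitely many test points `w`, the posterior covariance matrix `(k(wᵢ, wⱼ; x))ᵢⱼ` is the
Schur complement of `K_x + σ² I` in the Gram matrix of the concatenated points `(x, w)` with
`σ² I` added to its `x`-block. That block matrix is positive semidefinite and `K_x + σ² I` is
positive definite, so the posterior covariance matrix is positive semidefinite. Testing it
at `w = (z₁, z₂)` against the vector `(1, -1)` gives the inequality.
-/

open Matrix

namespace Matrix.PosSemidef

variable {m n : Type*} [Fintype m] [Fintype n]

theorem apply_add_apply_le {R : Type*} [CommRing R] [PartialOrder R] [StarRing R]
    [StarOrderedRing R] [DecidableEq n] {M : Matrix n n R} (hM : M.PosSemidef) (i j : n) :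
    M i j + M j i ≤ M i i + M j j := by
  have h := hM.dotProduct_mulVec_nonneg (Pi.single i 1 - Pi.single j 1)
  simp only [star_sub, Pi.star_single, star_one, mulVec_sub, mulVec_single, MulOpposite.op_one,
    one_smul, dotProduct_sub, sub_dotProduct, single_dotProduct, col_apply, one_mul] at h
  linear_combination h

theorem schur_complement_add_smul_one {K : Type*} [Field K] [PartialOrder K] [StarRing K]
    [StarOrderedRing K] [DecidableEq m] {A : Matrix m m K} {B : Matrix m n K} {D : Matrix n n K}
    (h : (fromBlocks A B Bᴴ D).PosSemidef) {c : K} (hc : 0 < c) :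
    (D - Bᴴ * (A + c • 1)⁻¹ * B).PosSemidef := by
  classical
  have hA : A.PosSemidef := h.submatrix Sum.inl
  have hc1 : (c • 1 : Matrix m m K).PosDef := by
    rw [smul_one_eq_diagonal]
    exact .diagonal fun _ => hc
  have hAc : (A + c • 1).PosDef := PosDef.posSemidef_add hA hc1
  have : Invertible (A + c • 1) := hAc.isUnit.invertible
  refine (PosDef.fromBlocks₁₁ B D hAc).mp ?_
  have hshift : fromBlocks (A + c • 1) B Bᴴ D =
      fromBlocks A B Bᴴ D + diagonal (Sum.elim (fun _ => c) fun _ => 0) := by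
    rw [← fromBlocks_diagonal, diagonal_zero, fromBlocks_add, smul_one_eq_diagonal]
    simp only [add_zero]
  rw [hshift]
  exact h.add (.diagonal fun i => by cases i <;> simp [hc.le])

end Matrix.PosSemidef

section Kernel

variable {ι α β R : Type*}

def kernelMatrix (k : ι → ι → R) (x : α → ι) (y : β → ι) : Matrix α β R :=
  of fun i j => k (x i) (y j)

theorem fromBlocks_kernelMatrix (k : ι → ι → R) (x : α → ι) (y : β → ι) :
    fromBlocks (kernelMatrix k x x) (kernelMatrix k x y) (kernelMatrix k y x)
      (kernelMatrix k y y) = kernelMatrix k (Sum.elim x y) (Sum.elim x y) := by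
  ext (i | i) (j | j) <;> rfl

theorem kernelMatrix_posSemidef [Ring R] [PartialOrder R] [StarRing R] {k : ι → ι → R}
    (hpsd : ∀ (n : ℕ) (x : Fin n → ι), (kernelMatrix k x x).PosSemidef)
    [Fintype α] (x : α → ι) : (kernelMatrix k x x).PosSemidef := by
  let e := Fintype.equivFin α
  have hreindex :
      kernelMatrix k x x = (kernelMatrix k (x ∘ e.symm) (x ∘ e.symm)).submatrix e e := by
    ext i j
    simp [kernelMatrix]
  rw [hreindex]
  exact (hpsd _ _).submatrix e

noncomputable def postCovMatrix (k : ι → ι → ℝ) (σ : ℝ) {n : ℕ} (x : Fin n → ι) (w : α → ι) :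
    Matrix α α ℝ :=
  of fun i j => postCov k σ x (w i) (w j)

theorem postCovMatrix_eq_schur [Fintype α] (k : ι → ι → ℝ) (σ : ℝ) {n : ℕ} (x : Fin n → ι)
    (w : α → ι) :
    postCovMatrix k σ x w = kernelMatrix k w w - (kernelMatrix k x w)ᴴ *
      (kernelMatrix k x x + σ ^ 2 • 1)⁻¹ * kernelMatrix k x w := by
  ext i j
  rw [Matrix.mul_assoc]
  rfl

theorem postCovMatrix_posSemidef {k : ι → ι → ℝ}
    (hpsd : ∀ (n : ℕ) (x : Fin n → ι), (kernelMatrix k x x).PosSemidef)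
    {σ : ℝ} (hσ : σ ≠ 0) {n : ℕ} (x : Fin n → ι) [Fintype α] (w : α → ι) :
    (postCovMatrix k σ x w).PosSemidef := by
  have hblock := kernelMatrix_posSemidef hpsd (Sum.elim x w)
  rw [← fromBlocks_kernelMatrix] at hblock
  obtain ⟨-, hBC, -, -⟩ := isHermitian_fromBlocks_iff.mp hblock.isHermitian
  rw [← hBC] at hblock
  rw [postCovMatrix_eq_schur]
  exact hblock.schur_complement_add_smul_one (pow_two_pos_of_ne_zero hσ)

end Kernel

theorem posterior_covariance_le_avg_variances_general
    {ι : Type*} (k : ι → ι → ℝ) (σ : ℝ)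
    (hσ : 0 < σ)
    (hpsd : ∀ (n : ℕ) (x : Fin n → ι),
      (Matrix.of (fun i j => k (x i) (x j)) : Matrix (Fin n) (Fin n) ℝ).PosSemidef)
    (n : ℕ) (x : Fin n → ι) (z₁ z₂ : ι) :
    2 * postCov k σ x z₁ z₂ ≤ postVar k σ x z₁ + postVar k σ x z₂ := by
  have hM := postCovMatrix_posSemidef hpsd hσ.ne' x ![z₁, z₂]
  have hswap : postCov k σ x z₂ z₁ = postCov k σ x z₁ z₂ := by
    simpa [postCovMatrix] using hM.isHermitian.apply 0 1
  have hquad := hM.apply_add_apply_le 0 1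
  simp only [postCovMatrix, of_apply, cons_val_zero, cons_val_one] at hquad
  rw [postVar, postVar]
  linarith

theorem posterior_covariance_le_avg_variances
    {ι : Type*} (k : ι → ι → ℝ) (σ : ℝ)
    (hσ : 0 < σ)
    (hsymm : ∀ z z', k z z' = k z' z)
    (hpsd : ∀ (n : ℕ) (x : Fin n → ι),
      (Matrix.of (fun i j => k (x i) (x j)) : Matrix (Fin n) (Fin n) ℝ).PosSemidef)
    (n : ℕ) (x : Fin n → ι) (z₁ z₂ : ι) :
    2 * postCov k σ x z₁ z₂ ≤ postVar k σ x z₁ + postVar k σ x z₂ :=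
  posterior_covariance_le_avg_variances_general k σ hσ hpsd n x z₁ z₂
end

section
/- Let n ≥ 1, let (Ω, P) be a probability space, and let X : Fin n → Ω → ℝ be random variables such that each X i has law gaussianReal 0 v_i (a centered Gaussian with variance v_i) with v_i ≤ ζ² for some ζ ≥ 0. Then the expectation of their pointwise maximum satisfies E[max_{1 ≤ i ≤ n} X_i] ≤ ζ · √(2 · log n). -/
open MeasureTheory ProbabilityTheory Real
open scoped NNReal

/-!
By Jensen, `exp (t 𝔼[max Xᵢ]) ≤ 𝔼[exp (t max Xᵢ)] ≤ ∑ᵢ 𝔼[exp (t Xᵢ)] ≤ n exp (ζ² t² / 2)` for every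
`t`, so `𝔼[max Xᵢ] ≤ log n / t + ζ² t / 2` for `t > 0`, and `t = √(2 log n) / ζ` gives the
bound.
-/

lemma hasSubgaussianMGF_of_map_eq_gaussianReal {Ω : Type*} [MeasurableSpace Ω] {P : Measure Ω}
    [IsProbabilityMeasure P] {X : Ω → ℝ} {v c : ℝ≥0} (hlaw : P.map X = gaussianReal 0 v) (hvc : v ≤ c) :
    HasSubgaussianMGF X c P where
  integrable_exp_mul t := by
    rw [← mgf_pos_iff, mgf_gaussianReal hlaw]
    exact exp_pos _
  mgf_le t := by
    rw [mgf_gaussianReal hlaw, zero_mul, zero_add]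
    gcongr

section FiniteMax

variable {ι : Type*} [Fintype ι] [Nonempty ι]

lemma abs_iSup_le_sum_abs (x : ι → ℝ) : |⨆ i, x i| ≤ ∑ i, |x i| := by
  obtain ⟨j, hj⟩ := exists_eq_ciSup_of_finite (f := x)
  rw [← hj]
  exact Finset.single_le_sum (fun i _ => abs_nonneg (x i)) (Finset.mem_univ j)

lemma exp_mul_iSup_le_sum (t : ℝ) (x : ι → ℝ) :
    exp (t * ⨆ i, x i) ≤ ∑ i, exp (t * x i) := by
  obtain ⟨j, hj⟩ := exists_eq_ciSup_of_finite (f := x)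
  rw [← hj]
  exact Finset.single_le_sum (fun i _ => (exp_pos (t * x i)).le) (Finset.mem_univ j)

variable {Ω : Type*} [MeasurableSpace Ω] {μ : Measure Ω} {X : ι → Ω → ℝ}

lemma integrable_iSup (hX : ∀ i, Integrable (X i) μ) : Integrable (fun ω => ⨆ i, X i ω) μ :=
  (integrable_finsetSum Finset.univ fun i _ => (hX i).abs).mono'
    (AEMeasurable.iSup fun i => (hX i).aemeasurable).aestronglyMeasurable
    (Filter.Eventually.of_forall fun _ => abs_iSup_le_sum_abs _)

lemma integrable_exp_mul_iSup {t : ℝ}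
    (hX : ∀ i, Integrable (fun ω => exp (t * X i ω)) μ) (hXm : ∀ i, AEMeasurable (X i) μ) :
    Integrable (fun ω => exp (t * ⨆ i, X i ω)) μ :=
  (integrable_finsetSum Finset.univ fun i _ => hX i).mono'
    (measurable_exp.comp_aemeasurable ((AEMeasurable.iSup hXm).const_mul t)).aestronglyMeasurable
    (Filter.Eventually.of_forall fun _ => by
      rw [norm_of_nonneg (exp_pos _).le]; exact exp_mul_iSup_le_sum t _)

lemma mul_integral_iSup_le_of_hasSubgaussianMGF [IsProbabilityMeasure μ] {c : ℝ≥0}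
    (hX : ∀ i, HasSubgaussianMGF (X i) c μ) (t : ℝ) :
    t * ∫ ω, ⨆ i, X i ω ∂μ ≤ log (Fintype.card ι) + c * t ^ 2 / 2 := by
  have h_exp_int : Integrable (fun ω => exp (t * ⨆ i, X i ω)) μ :=
    integrable_exp_mul_iSup (fun i => (hX i).integrable_exp_mul t) fun i => (hX i).aemeasurable
  have h_jensen : exp (t * ∫ ω, ⨆ i, X i ω ∂μ) ≤ ∫ ω, exp (t * ⨆ i, X i ω) ∂μ := by
    rw [← integral_const_mul]
    exact convexOn_exp.map_integral_le continuous_exp.continuousOn isClosed_univ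
      (Filter.Eventually.of_forall fun _ => Set.mem_univ _)
      ((integrable_iSup fun i => (hX i).integrable).const_mul t) h_exp_int
  have h_union : ∫ ω, exp (t * ⨆ i, X i ω) ∂μ ≤ Fintype.card ι * exp (c * t ^ 2 / 2) :=
    calc ∫ ω, exp (t * ⨆ i, X i ω) ∂μ ≤ ∫ ω, ∑ i, exp (t * X i ω) ∂μ :=
          integral_mono h_exp_int (integrable_finsetSum _ fun i _ => (hX i).integrable_exp_mul t)
            fun ω => exp_mul_iSup_le_sum t _
      _ = ∑ i, mgf (X i) μ t := integral_finsetSum _ fun i _ => (hX i).integrable_exp_mul t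
      _ ≤ ∑ _i : ι, exp (c * t ^ 2 / 2) := Finset.sum_le_sum fun i _ => (hX i).mgf_le t
      _ = Fintype.card ι * exp (c * t ^ 2 / 2) := by simp
  rw [← exp_le_exp, exp_add, exp_log (by exact_mod_cast Fintype.card_pos)]
  exact h_jensen.trans h_union

end FiniteMax

lemma le_mul_sqrt_of_forall_mul_le {a L ζ : ℝ} (hζ : 0 ≤ ζ) (hL : 0 ≤ L)
    (h : ∀ t, 0 < t → t * a ≤ L + ζ ^ 2 * t ^ 2 / 2) : a ≤ ζ * √(2 * L) := by
  set s := √(2 * L)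
  have hs : 0 ≤ s := sqrt_nonneg _
  have hL' : L = s ^ 2 / 2 := by rw [sq_sqrt (by linarith)]; ring
  have h_perturbed : ∀ ε, 0 < ε → a ≤ ζ * s + ε * (s + ζ) / 2 := by
    intro ε hε
    -- `(s + ε) / (ζ + ε)` stands in for the optimal `t = s / ζ`, which may be `0` or undefined.
    have hA : 0 < s + ε := by positivity
    have hB : 0 < ζ + ε := by positivity
    have ht := h ((s + ε) / (ζ + ε)) (div_pos hA hB)
    have hcleared : (s + ε) * (ζ + ε) * a ≤ (s ^ 2 * (ζ + ε) ^ 2 + ζ ^ 2 * (s + ε) ^ 2) / 2 := by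
      rw [hL'] at ht
      field_simp at ht
      linarith
    have h_slack : 0 ≤ ε * (s * (ζ + ε) ^ 2 + ζ * (s + ε) ^ 2) := by positivity
    nlinarith [mul_pos hA hB]
  by_contra! hlt
  have h_gap := h_perturbed ((a - ζ * s) / (s + ζ + 1)) (by apply div_pos <;> linarith)
  have hd : (a - ζ * s) / (s + ζ + 1) * (s + ζ + 1) = a - ζ * s := by field_simp
  nlinarith

theorem expected_max_of_gaussians_le_general
    {Ω : Type*} [MeasurableSpace Ω] (P : Measure Ω) [IsProbabilityMeasure P]
    (n : ℕ) (hn : 1 ≤ n)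
    (X : Fin n → Ω → ℝ)
    (v : Fin n → ℝ≥0) (ζ : ℝ) (hζ : 0 ≤ ζ)
    (hlaw : ∀ i, P.map (X i) = gaussianReal 0 (v i))
    (hv : ∀ i, (v i : ℝ) ≤ ζ ^ 2) :
    ∫ ω, (⨆ i, X i ω) ∂P ≤ ζ * Real.sqrt (2 * Real.log n) := by
  have : Nonempty (Fin n) := ⟨⟨0, hn⟩⟩
  have h_subG : ∀ i, HasSubgaussianMGF (X i) ⟨ζ ^ 2, sq_nonneg ζ⟩ P := fun i =>
    hasSubgaussianMGF_of_map_eq_gaussianReal (hlaw i) (hv i)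
  refine le_mul_sqrt_of_forall_mul_le hζ (log_natCast_nonneg n) fun t _ => ?_
  have := mul_integral_iSup_le_of_hasSubgaussianMGF h_subG t
  rwa [Fintype.card_fin] at this

theorem expected_max_of_gaussians_le
    {Ω : Type*} [MeasurableSpace Ω] (P : Measure Ω) [IsProbabilityMeasure P]
    (n : ℕ) (hn : 1 ≤ n)
    (X : Fin n → Ω → ℝ) (hX : ∀ i, Measurable (X i))
    (v : Fin n → ℝ≥0) (ζ : ℝ) (hζ : 0 ≤ ζ)
    (hlaw : ∀ i, P.map (X i) = gaussianReal 0 (v i))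
    (hv : ∀ i, (v i : ℝ) ≤ ζ ^ 2) :
    ∫ ω, (⨆ i, X i ω) ∂P ≤ ζ * Real.sqrt (2 * Real.log n) :=
  expected_max_of_gaussians_le_general P n hn X v ζ hζ hlaw hv
end

section
/- Let ς > 0, η ∈ ℝ, and a ≥ 0, and let μ = gaussianReal η ς² be the Gaussian measure on ℝ with mean η and variance ς². Then the integral of the shifted upper tail satisfies ∫_{a}^{∞} μ{y : y − η ≥ x} dx ≤ √(2π) · ς · exp(−a² / (2ς²)). -/
/-!
By the Chernoff bound for the centred Gaussian, `μ {y | y - η ≥ x} ≤ exp (-x² / (2ς²))` for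
`x ≥ 0`. For `x ≥ a ≥ 0` we have `x² ≥ a² + (x - a)²`, so this is at most
`exp (-a² / (2ς²)) · √(2π) ς` times the density of `gaussianReal a (ς²)` at `x`,
and that density has integral at most `1` over `[a, ∞)`.
-/

open MeasureTheory ProbabilityTheory Real
open scoped NNReal

lemma hasSubgaussianMGF_id_gaussianReal_zero (v : ℝ≥0) :
    HasSubgaussianMGF id v (gaussianReal 0 v) where
  integrable_exp_mul t := integrable_exp_mul_gaussianReal t
  mgf_le t := by simp [mgf_id_gaussianReal]

lemma hasSubgaussianMGF_sub_mean_gaussianReal (μ : ℝ) (v : ℝ≥0) :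
    HasSubgaussianMGF (· - μ) v (gaussianReal μ v) := by
  rw [← HasSubgaussianMGF.id_map_iff (by fun_prop), gaussianReal_map_sub_const, sub_self]
  exact hasSubgaussianMGF_id_gaussianReal_zero v

lemma gaussianReal_real_sub_mean_ge_le (μ : ℝ) (v : ℝ≥0) {x : ℝ} (hx : 0 ≤ x) :
    (gaussianReal μ v).real {y | y - μ ≥ x} ≤ exp (-x ^ 2 / (2 * v)) :=
  (hasSubgaussianMGF_sub_mean_gaussianReal μ v).measure_ge_le hx

lemma sqrt_mul_gaussianPDFReal (μ : ℝ) {v : ℝ≥0} (hv : v ≠ 0) (x : ℝ) :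
    √(2 * π * v) * gaussianPDFReal μ v x = exp (-(x - μ) ^ 2 / (2 * v)) := by
  rw [gaussianPDFReal, mul_inv_cancel_left₀ (by positivity)]

lemma exp_neg_sq_div_le_mul {c a x : ℝ} (hc : 0 ≤ c) (ha : 0 ≤ a) (hax : a ≤ x) :
    exp (-x ^ 2 / c) ≤ exp (-a ^ 2 / c) * exp (-(x - a) ^ 2 / c) := by
  have hsq : a ^ 2 + (x - a) ^ 2 ≤ x ^ 2 := by nlinarith
  rw [← exp_add, exp_le_exp, ← add_div, ← neg_add]
  exact div_le_div_of_nonneg_right (neg_le_neg hsq) hc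

theorem gaussian_shifted_tail_integral_le
    (ς : ℝ≥0) (hς : 0 < ς) (η : ℝ) (a : ℝ) (ha : 0 ≤ a) :
    ∫ x in Set.Ici a, ((gaussianReal η (ς ^ 2)) {y : ℝ | y - η ≥ x}).toReal ≤
      Real.sqrt (2 * Real.pi) * (ς : ℝ) * Real.exp (-a ^ 2 / (2 * (ς : ℝ) ^ 2)) := by
  have hv : ς ^ 2 ≠ 0 := pow_ne_zero 2 hς.ne'
  set C := exp (-a ^ 2 / (2 * (ς ^ 2 : ℝ≥0))) * √(2 * π * (ς ^ 2 : ℝ≥0))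
  have htail : ∀ x ∈ Set.Ici a,
      ((gaussianReal η (ς ^ 2)) {y : ℝ | y - η ≥ x}).toReal ≤ C * gaussianPDFReal a (ς ^ 2) x :=
    fun x hx => calc
      _ ≤ exp (-x ^ 2 / (2 * (ς ^ 2 : ℝ≥0))) := gaussianReal_real_sub_mean_ge_le η _ (ha.trans hx)
      _ ≤ exp (-a ^ 2 / (2 * (ς ^ 2 : ℝ≥0))) * exp (-(x - a) ^ 2 / (2 * (ς ^ 2 : ℝ≥0))) :=
        exp_neg_sq_div_le_mul (by positivity) ha hx
      _ = C * gaussianPDFReal a (ς ^ 2) x := by rw [mul_assoc, sqrt_mul_gaussianPDFReal a hv]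
  calc ∫ x in Set.Ici a, ((gaussianReal η (ς ^ 2)) {y : ℝ | y - η ≥ x}).toReal
      ≤ ∫ x in Set.Ici a, C * gaussianPDFReal a (ς ^ 2) x :=
        integral_mono_of_nonneg (ae_of_all _ fun _ => ENNReal.toReal_nonneg)
          ((integrable_gaussianPDFReal a _).const_mul C).integrableOn
          ((ae_restrict_mem measurableSet_Ici).mono htail)
    _ ≤ C := by
        rw [integral_const_mul]
        refine mul_le_of_le_one_right (by positivity) ?_
        exact (setIntegral_le_integral (integrable_gaussianPDFReal a _)
          (ae_of_all _ (gaussianPDFReal_nonneg a _))).trans_eq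
          (integral_gaussianPDFReal_eq_one a hv)
    _ = √(2 * π) * ς * exp (-a ^ 2 / (2 * (ς : ℝ) ^ 2)) := by
        simp only [C, NNReal.coe_pow]
        rw [mul_comm, sqrt_mul (by positivity), Real.sqrt_sq ς.coe_nonneg]
end

section
/- Let c ≥ 0 and let u : ℕ → ℕ → ℝ satisfy: (i) u i j ≥ 0 for all i, j, and (ii) u i j − u i (j+1) ≤ c · u j j whenever j < i. Then for every s : ℕ, ∑_{i=0}^{s−1} u i 0 ≤ ∑_{q=0}^{s−1} (1 + c · (s − 1 − q)) · u q q. -/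
/-! Telescoping the decrement bound along `j = 0, …, i - 1` gives
`u i 0 ≤ u i i + c · ∑_{j < i} u j j`; summing over `i < s`, the diagonal term `u q q`
is counted once for every `i` with `q < i < s`, that is `s - 1 - q` times. -/

open Finset

lemma le_add_sum_of_sub_succ_le {f a : ℕ → ℝ} {n : ℕ}
    (h : ∀ j < n, f j - f (j + 1) ≤ a j) :
    f 0 ≤ f n + ∑ j ∈ range n, a j := by
  have htelescope : f 0 - f n = ∑ j ∈ range n, (f j - f (j + 1)) :=
    (sum_range_sub' f n).symm
  have hbound : ∑ j ∈ range n, (f j - f (j + 1)) ≤ ∑ j ∈ range n, a j :=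
    sum_le_sum fun j hj => h j (mem_range.mp hj)
  linarith

lemma sum_range_sum_range_eq_sum_mul (f : ℕ → ℝ) (s : ℕ) :
    ∑ i ∈ range s, ∑ j ∈ range i, f j = ∑ q ∈ range s, ((s : ℝ) - 1 - q) * f q := by
  induction s with
  | zero => simp
  | succ s ih =>
    rw [sum_range_succ, ih, sum_range_succ, ← sum_add_distrib]
    push_cast
    rw [show ((s : ℝ) + 1 - 1 - s) * f s = 0 by ring, add_zero]
    exact sum_congr rfl fun q _ => by ring

theorem lookahead_variance_sum_bound_general
    (c : ℝ) (u : ℕ → ℕ → ℝ)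
    (hdec : ∀ i j, j < i → u i j - u i (j + 1) ≤ c * u j j)
    (s : ℕ) :
    ∑ i ∈ Finset.range s, u i 0 ≤
      ∑ q ∈ Finset.range s, (1 + c * ((s : ℝ) - 1 - (q : ℝ))) * u q q := by
  have hrow : ∀ i, u i 0 ≤ u i i + c * ∑ j ∈ range i, u j j := fun i => by
    rw [mul_sum]
    exact le_add_sum_of_sub_succ_le (hdec i)
  calc ∑ i ∈ range s, u i 0
      ≤ ∑ i ∈ range s, (u i i + c * ∑ j ∈ range i, u j j) := sum_le_sum fun i _ => hrow i
    _ = ∑ i ∈ range s, u i i + c * ∑ q ∈ range s, ((s : ℝ) - 1 - q) * u q q := by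
      rw [sum_add_distrib, ← mul_sum, sum_range_sum_range_eq_sum_mul (fun j => u j j)]
    _ = ∑ q ∈ range s, (1 + c * ((s : ℝ) - 1 - q)) * u q q := by
      rw [mul_sum, ← sum_add_distrib]
      exact sum_congr rfl fun q _ => by ring

theorem lookahead_variance_sum_bound
    (c : ℝ) (hc : 0 ≤ c) (u : ℕ → ℕ → ℝ)
    (hnonneg : ∀ i j, 0 ≤ u i j)
    (hdec : ∀ i j, j < i → u i j - u i (j + 1) ≤ c * u j j)
    (s : ℕ) :
    ∑ i ∈ Finset.range s, u i 0 ≤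
      ∑ q ∈ Finset.range s, (1 + c * ((s : ℝ) - 1 - (q : ℝ))) * u q q :=
  lookahead_variance_sum_bound_general c u hdec s
end

section
/- Fix K ≥ 1 and z_max ≥ 1. For z : Fin K → ℕ define the update map h by (h z j) j = 0 and (h z j) i = min(z i + 1, z_max) for i ≠ j. Let z : Fin K → ℕ satisfy z i ≤ z_max for all i, and let z' : Fin K → ℕ satisfy: z' i ≤ z_max for all i; there is exactly one index i₀ with z' i₀ = 0; and z' is injective on its sub-maximal coordinates (for all i, i', if z' i < z_max, z' i' < z_max and z' i = z' i' then i = i'). Then there exists a sequence of arms j : Fin z_max → Fin K such that iterating the update map from z along j₁, …, j_{z_max} produces exactly z' after z_max steps: if s 0 = z and s (t+1) = h (s t) (j t) for t < z_max, then s z_max = z'. -/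
/-- Update map on recovering-bandits states `Fin K → ℕ`: playing arm `j`
resets coordinate `j` to `0` and increments every other coordinate, capped
at `zmax`. -/
def updN (K zmax : ℕ) (z : Fin K → ℕ) (j : Fin K) : Fin K → ℕ :=
  fun i => if i = j then 0 else min (z i + 1) zmax

theorem feasible_state_reachable_in_zmax_steps
    (K zmax : ℕ) (hK : 1 ≤ K) (hzmax : 1 ≤ zmax)
    (z : Fin K → ℕ) (hz : ∀ i, z i ≤ zmax)
    (z' : Fin K → ℕ)
    (hz' : ∀ i, z' i ≤ zmax)
    (hzero : ∃! i₀, z' i₀ = 0)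
    (hinj : ∀ i i', z' i < zmax → z' i' < zmax → z' i = z' i' → i = i') :
    ∃ j : Fin zmax → Fin K,
      ∀ s : ℕ → (Fin K → ℕ), s 0 = z →
        (∀ t : Fin zmax, s ((t : ℕ) + 1) = updN K zmax (s (t : ℕ)) (j t)) →
        s zmax = z' := by
  classical
  obtain ⟨i₀, hi₀, huniq⟩ := hzero
  set j : Fin zmax → Fin K :=
    fun t => if h : ∃ i, z' i = zmax - 1 - (t : ℕ) then h.choose else i₀ with hj
  -- property: either the chosen arm has the designated value, or it is the filler i₀
  have hJval : ∀ t : Fin zmax,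
      z' (j t) = zmax - 1 - (t : ℕ) ∨ (z' (j t) = 0 ∧ ∀ i, z' i ≠ zmax - 1 - (t : ℕ)) := by
    intro t
    by_cases h : ∃ i, z' i = zmax - 1 - (t : ℕ)
    · left; simp only [hj, dif_pos h]; exact h.choose_spec
    · right
      constructor
      · simp only [hj, dif_neg h]; exact hi₀
      · exact fun i hi => h ⟨i, hi⟩
  -- property: an arm with sub-maximal target value c is chosen at step zmax-1-c
  have hJsel : ∀ (i : Fin K) (hc : z' i < zmax)
      (ht : zmax - 1 - z' i < zmax), j ⟨zmax - 1 - z' i, ht⟩ = i := by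
    intro i hc ht
    have hval : zmax - 1 - (zmax - 1 - z' i) = z' i := by omega
    have hex : ∃ i', z' i' = zmax - 1 - (zmax - 1 - z' i) := ⟨i, hval.symm⟩
    simp only [hj, dif_pos hex]
    have hspec := hex.choose_spec
    exact hinj _ i (by omega) hc (by omega)
  refine ⟨j, ?_⟩
  intro s hs0 hstep
  -- invariant: all coordinates stay ≤ zmax
  have hbound : ∀ t, t ≤ zmax → ∀ i, s t i ≤ zmax := by
    intro t
    induction t with
    | zero => intro _ i; rw [hs0]; exact hz i
    | succ t ih =>
      intro ht i
      have h2 := hstep ⟨t, by omega⟩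
      rw [h2]
      by_cases hij : i = j ⟨t, by omega⟩
      · simp [updN, hij]
      · simp [updN, hij]
  -- growth lemma: if arm i is not played during [a, a+d), its value grows by d (capped)
  have grow : ∀ (i : Fin K) (d a : ℕ), a + d ≤ zmax →
      (∀ t (hta : a ≤ t) (htb : t < a + d) (ht : t < zmax), j ⟨t, ht⟩ ≠ i) →
      s (a + d) i = min (s a i + d) zmax := by
    intro i d
    induction d with
    | zero =>
      intro a ha _
      have := hbound a (by omega) i
      simp only [Nat.add_zero]
      omega
    | succ d ih =>
      intro a hle hni
      have h1 : s (a + d) i = min (s a i + d) zmax := by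
        apply ih a (by omega)
        intro t hta htb ht
        exact hni t hta (by omega) ht
      have ht : a + d < zmax := by omega
      have h2 := hstep ⟨a + d, ht⟩
      have hne : i ≠ j ⟨a + d, ht⟩ := (hni (a + d) (by omega) (by omega) ht).symm
      have h3 : s (a + d + 1) i = min (s (a + d) i + 1) zmax := by
        rw [h2]; simp [updN, hne]
      have hsa := hbound a (by omega) i
      rw [show a + (d + 1) = a + d + 1 from rfl, h3, h1]
      omega
  funext i
  by_cases hc : z' i < zmax
  · -- i is played last at step T = zmax - 1 - z' i
    set c := z' i with hcdef
    have hT : zmax - 1 - c < zmax := by omega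
    have hplay : j ⟨zmax - 1 - c, hT⟩ = i := hJsel i hc hT
    have hreset : s (zmax - 1 - c + 1) i = 0 := by
      have h2 := hstep ⟨zmax - 1 - c, hT⟩
      rw [h2]
      simp [updN, hplay.symm]
    have hfin : s (zmax - 1 - c + 1 + c) i = min (s (zmax - 1 - c + 1) i + c) zmax := by
      apply grow i c (zmax - 1 - c + 1) (by omega)
      intro t hta htb ht heq
      rcases hJval ⟨t, ht⟩ with h | ⟨h0, _⟩
      · rw [heq] at h
        simp only [← hcdef] at h
        omega
      · rw [heq] at h0
        simp only [← hcdef] at h0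
        omega
    rw [show zmax - 1 - c + 1 + c = zmax by omega] at hfin
    rw [hfin, hreset]
    omega
  · -- z' i = zmax : arm i is never played
    push_neg at hc
    have hceq : z' i = zmax := le_antisymm (hz' i) hc
    have hfin : s (0 + zmax) i = min (s 0 i + zmax) zmax := by
      apply grow i zmax 0 (by omega)
      intro t _ _ ht heq
      rcases hJval ⟨t, ht⟩ with h | ⟨h0, _⟩
      · rw [heq, hceq] at h; omega
      · rw [heq, hceq] at h0; omega
    rw [zero_add] at hfin
    rw [hfin, hs0, hceq]
    omega
end

section
/- Let T, p, z be real numbers with T > 0, p > 0, z ≥ 0, and let l be a natural number with l ≥ 1. Then (⌊T / (l·p + z)⌋ · l) / ⌈T / p⌉ ≥ (1 − ((l + 1)·p + z) / (T + p)) · (l·p / (l·p + z)), where ⌊·⌋ and ⌈·⌉ denote the integer floor and ceiling and the left-hand side is interpreted in ℝ. -/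
theorem lookahead_vs_periodic_reward_ratio
    (T p z : ℝ) (hT : 0 < T) (hp : 0 < p) (hz : 0 ≤ z)
    (l : ℕ) (hl : 1 ≤ l) :
    ((⌊T / ((l : ℝ) * p + z)⌋ : ℝ) * (l : ℝ)) / ((⌈T / p⌉ : ℝ)) ≥
      (1 - (((l : ℝ) + 1) * p + z) / (T + p)) * ((l : ℝ) * p / ((l : ℝ) * p + z)) := by
  have hl1 : (1:ℝ) ≤ (l:ℝ) := by exact_mod_cast hl
  have hL : (0:ℝ) < (l:ℝ) * p + z := by nlinarith
  have hTp : (0:ℝ) < T + p := by linarith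
  have hC1 : (1:ℝ) ≤ (⌈T/p⌉ : ℝ) := by
    exact_mod_cast Int.one_le_ceil_iff.mpr (div_pos hT hp)
  have hC0 : (0:ℝ) < (⌈T/p⌉ : ℝ) := lt_of_lt_of_le one_pos hC1
  have hF0 : (0:ℝ) ≤ (⌊T / ((l:ℝ)*p+z)⌋ : ℝ) := by
    exact_mod_cast Int.floor_nonneg.mpr (le_of_lt (div_pos hT hL))
  set F : ℝ := (⌊T / ((l:ℝ)*p+z)⌋ : ℝ) with hFdef
  set C : ℝ := (⌈T/p⌉ : ℝ) with hCdef
  have hFge : T / ((l:ℝ)*p+z) - 1 < F := Int.sub_one_lt_floor _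
  have h1 : T - ((l:ℝ)*p+z) ≤ F * ((l:ℝ)*p+z) := by
    have : T / ((l:ℝ)*p+z) ≤ F + 1 := by linarith
    rw [div_le_iff₀ hL] at this; nlinarith
  have hCle : C ≤ T/p + 1 := le_of_lt (Int.ceil_lt_add_one _)
  have h2 : C * p ≤ T + p := by
    have h := mul_le_mul_of_nonneg_right hCle hp.le
    rw [add_mul, div_mul_cancel₀ _ (ne_of_gt hp), one_mul] at h
    exact h
  rcases le_or_gt T ((l:ℝ)*p+z) with h | h
  · have hrhs : (1 - (((l:ℝ)+1)*p+z)/(T+p)) ≤ 0 := by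
      rw [sub_nonpos, le_div_iff₀ hTp]; nlinarith
    have hR : (1 - (((l:ℝ)+1)*p+z)/(T+p)) * ((l:ℝ)*p/((l:ℝ)*p+z)) ≤ 0 :=
      mul_nonpos_of_nonpos_of_nonneg hrhs (by positivity)
    have hLpos : 0 ≤ F * (l:ℝ) / C := by positivity
    linarith [hR, hLpos]
  · rw [ge_iff_le]
    have heq : (1 - (((l:ℝ)+1)*p+z)/(T+p)) * ((l:ℝ)*p/((l:ℝ)*p+z))
        = (T - ((l:ℝ)*p+z)) * ((l:ℝ)*p) / ((T+p) * ((l:ℝ)*p+z)) := by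
      field_simp; ring
    rw [heq, div_le_div_iff₀ (by positivity) hC0]
    have hTL : (0:ℝ) ≤ T - ((l:ℝ)*p+z) := by linarith
    nlinarith [mul_le_mul h1 h2 (by positivity) (by nlinarith : (0:ℝ) ≤ F * ((l:ℝ)*p+z)), hF0, hC0.le, mul_nonneg hF0 hz]
end

section
/- Let A be a real number with A > 1, and let N, n₀, d, d₀ be natural numbers with n₀ < N, d₀ ≤ d, and (N : ℝ) − n₀ ≤ A^(d₀ + 1) · (A^(d − d₀) − 1) / (A − 1). Then (d : ℝ) ≥ log(N − n₀) / log A + log(A − 1) / log A − 1, where log denotes the natural logarithm. -/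
open Real

lemma pow_succ_mul_pow_sub_sub_one_le {A : ℝ} (hA : 0 ≤ A) {d₀ d : ℕ} (hd : d₀ ≤ d) :
    A ^ (d₀ + 1) * (A ^ (d - d₀) - 1) ≤ A ^ (d + 1) :=
  calc A ^ (d₀ + 1) * (A ^ (d - d₀) - 1)
      ≤ A ^ (d₀ + 1) * A ^ (d - d₀) := by gcongr; linarith
    _ = A ^ (d + 1) := by rw [← pow_add]; congr 1; omega

lemma log_div_log_le_of_le_pow {A x : ℝ} (hA : 1 < A) (hx : 0 < x) {n : ℕ} (h : x ≤ A ^ n) :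
    log x / log A ≤ n := by
  rw [div_le_iff₀ (log_pos hA), ← log_pow]
  exact log_le_log hx h

theorem optimistic_planning_depth_bound
    (A : ℝ) (hA : 1 < A) (N n₀ d d₀ : ℕ)
    (hN : n₀ < N) (hd : d₀ ≤ d)
    (hbudget : (N : ℝ) - (n₀ : ℝ) ≤ A ^ (d₀ + 1) * (A ^ (d - d₀) - 1) / (A - 1)) :
    (d : ℝ) ≥ Real.log ((N : ℝ) - (n₀ : ℝ)) / Real.log A
      + Real.log (A - 1) / Real.log A - 1 := by
  have hA1 : 0 < A - 1 := by linarith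
  have hM : (0 : ℝ) < N - n₀ := by
    have : (n₀ : ℝ) < N := by exact_mod_cast hN
    linarith
  have hkey : ((N : ℝ) - n₀) * (A - 1) ≤ A ^ (d + 1) :=
    ((le_div_iff₀ hA1).mp hbudget).trans (pow_succ_mul_pow_sub_sub_one_le (by linarith) hd)
  have hlog := log_div_log_le_of_le_pow hA (mul_pos hM hA1) hkey
  rw [log_mul hM.ne' hA1.ne', add_div] at hlog
  push_cast at hlog
  linarith
end

section
/- Fix K ≥ 2 and z_max ≥ 0, and set T₀ = K · (z_max + 1) · (z_max + 2). For z : Fin K → ℕ define the update map h by (h z j) j = 0 and (h z j) i = min(z i + 1, z_max) for i ≠ j. Then for every initial state z₀ : Fin K → ℕ with z₀ i ≤ z_max for all i, there exists a sequence of arms J : Fin T₀ → Fin K such that, defining the trajectory s 0 = z₀ and s (t+1) = h (s t) (J t), for every arm j : Fin K and every value v with v ≤ z_max there exists a round t : Fin T₀ with J t = j and (s t) j = v; i.e., within K·|Z|·(|Z|+1) rounds (|Z| = z_max + 1) every (arm, covariate) pair can be played at least once. -/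
/-- The schedule: time `t` lies in block `p = t / (zmax+2)`, which is devoted
to the pair `(j, v)` with `j = p / (zmax+1)` and `v = p % (zmax+1)`.
Within the block we play `j` at offsets `0` and `v+1`, and some other arm
otherwise. -/
def Jnat (K zmax : ℕ) (hK : 2 ≤ K) (t : ℕ) : Fin K :=
  let r := t % (zmax + 2)
  let p := t / (zmax + 2)
  let v := p % (zmax + 1)
  let jv := (p / (zmax + 1)) % K
  if r = 0 ∨ r = v + 1 then ⟨jv, Nat.mod_lt _ (by omega)⟩
  else if jv = 0 then ⟨1, by omega⟩ else ⟨0, by omega⟩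

theorem initialization_plays_every_arm_covariate_pair
    (K zmax : ℕ) (hK : 2 ≤ K)
    (z₀ : Fin K → ℕ) (hz₀ : ∀ i, z₀ i ≤ zmax) :
    ∃ J : Fin (K * (zmax + 1) * (zmax + 2)) → Fin K,
      ∀ s : ℕ → (Fin K → ℕ), s 0 = z₀ →
        (∀ t : Fin (K * (zmax + 1) * (zmax + 2)),
          s ((t : ℕ) + 1) = updN K zmax (s (t : ℕ)) (J t)) →
        ∀ j : Fin K, ∀ v : ℕ, v ≤ zmax →
          ∃ t : Fin (K * (zmax + 1) * (zmax + 2)), J t = j ∧ s (t : ℕ) j = v := by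
  refine ⟨fun t => Jnat K zmax hK t.val, ?_⟩
  intro s hs0 hrec j v hv
  set p : ℕ := j.val * (zmax + 1) + v with hp_def
  have hjK : j.val < K := j.isLt
  have hpK : p < K * (zmax + 1) := by
    calc p < (j.val + 1) * (zmax + 1) := by rw [hp_def]; ring_nf; omega
    _ ≤ K * (zmax + 1) := Nat.mul_le_mul_right _ (by omega)
  have hbound : ∀ r, r ≤ zmax + 1 → p * (zmax + 2) + r < K * (zmax + 1) * (zmax + 2) := by
    intro r hr
    calc p * (zmax + 2) + r < (p + 1) * (zmax + 2) := by ring_nf; omega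
    _ ≤ K * (zmax + 1) * (zmax + 2) := Nat.mul_le_mul_right _ (by omega)
  -- compute the schedule on the block of `p`
  have hJ : ∀ r, r ≤ zmax + 1 →
      Jnat K zmax hK (p * (zmax + 2) + r) =
        if r = 0 ∨ r = v + 1 then j
        else if j.val = 0 then ⟨1, by omega⟩ else ⟨0, by omega⟩ := by
    intro r hr
    have hmod : (p * (zmax + 2) + r) % (zmax + 2) = r := by
      rw [mul_comm p, Nat.mul_add_mod]; exact Nat.mod_eq_of_lt (by omega)
    have hdiv : (p * (zmax + 2) + r) / (zmax + 2) = p := by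
      rw [mul_comm p, Nat.mul_add_div (by omega), Nat.div_eq_of_lt (by omega)]; omega
    have hvmod : p % (zmax + 1) = v := by
      rw [hp_def, mul_comm, Nat.mul_add_mod]; exact Nat.mod_eq_of_lt (by omega)
    have hjdiv : p / (zmax + 1) = j.val := by
      rw [hp_def, mul_comm, Nat.mul_add_div (by omega), Nat.div_eq_of_lt (by omega)]; omega
    unfold Jnat
    simp only [hmod, hdiv, hvmod, hjdiv, Nat.mod_eq_of_lt hjK]
  -- key induction: after the reset at offset 0, arm j's counter climbs
  have key : ∀ k, k ≤ v → s (p * (zmax + 2) + 1 + k) j = k := by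
    intro k
    induction k with
    | zero =>
      intro _
      have h0 := hrec ⟨p * (zmax + 2), hbound 0 (by omega)⟩
      simp only [Fin.val_mk] at h0
      have hJ0 := hJ 0 (by omega)
      simp only [Nat.add_zero] at hJ0 ⊢
      rw [h0, updN]
      simp [hJ0]
    | succ k ih =>
      intro hk
      have hkv : k < v := by omega
      have harm := hJ (1 + k) (by omega)
      have hcond : ¬ (1 + k = 0 ∨ 1 + k = v + 1) := by omega
      rw [if_neg hcond] at harm
      have h1 := hrec ⟨p * (zmax + 2) + 1 + k, by
        have := hbound (1 + k) (by omega); omega⟩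
      simp only [Fin.val_mk] at h1
      have heq : p * (zmax + 2) + 1 + k + 1 = p * (zmax + 2) + 1 + (k + 1) := by omega
      have heq2 : p * (zmax + 2) + 1 + k = p * (zmax + 2) + (1 + k) := by omega
      rw [heq] at h1
      rw [h1, updN]
      have hne : j ≠ Jnat K zmax hK (p * (zmax + 2) + 1 + k) := by
        rw [heq2, harm]
        rcases eq_or_ne j.val 0 with h0 | h0
        · rw [if_pos h0]
          intro hc
          have := congrArg Fin.val hc
          simp at this
          omega
        · rw [if_neg h0]
          intro hc
          have := congrArg Fin.val hc
          simp at this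
          exact h0 this
      rw [if_neg hne, ih (by omega)]
      omega
  -- the hit at offset v + 1
  refine ⟨⟨p * (zmax + 2) + (v + 1), hbound (v + 1) (by omega)⟩, ?_, ?_⟩
  · show Jnat K zmax hK (p * (zmax + 2) + (v + 1)) = j
    have := hJ (v + 1) (by omega)
    rw [if_pos (Or.inr rfl)] at this
    exact this
  · have heq : p * (zmax + 2) + (v + 1) = p * (zmax + 2) + 1 + v := by omega
    simp only [Fin.val_mk, heq]
    exact key v le_rfl
end
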